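/- Let (V,μ,ν) be a weighted graph with V finite and connected (any two nodes are joined by a path of pairwise adjacent nodes), and let p ∈ [2,∞). Let φ : [0,∞) × V → [0,∞) be such that for every v ∈ V the function t ↦ φ(t,v) is differentiable on [0,∞) with ∂_t φ(t,v) = −L_p φ(t,v) for all t ≥ 0, and suppose that φ(0,·) is not identically zero. Then φ(t,v) > 0 for every t > 0 and every v ∈ V. -/
import Mathlib


/-- The discrete `p`-Laplacian on a finite weighted graph. -/
noncomputable def finPLap {V : Type*} [Fintype V] (μ : V → V → ℝ) (ν : V → ℝ) (p : ℝ)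
    (f : V → ℝ) (v : V) : ℝ :=
  (1 / ν v) * ∑ w, μ v w * |f v - f w| ^ (p - 2) * (f v - f w)

/-- Forward propagation of positivity at a single node (Grönwall). -/
lemma fwd_pos {V : Type*} [Fintype V]
    (μ : V → V → ℝ) (ν : V → ℝ)
    (hμnn : ∀ v w, 0 ≤ μ v w) (hν : ∀ v, 0 < ν v)
    (p : ℝ) (hp : 2 ≤ p)
    (φ : ℝ → V → ℝ)
    (hnn : ∀ t, 0 ≤ t → ∀ v, 0 ≤ φ t v)
    (hder : ∀ v, ∀ t, 0 ≤ t →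
      HasDerivWithinAt (fun s => φ s v) (-(finPLap μ ν p (φ t) v)) (Set.Ici 0) t)
    (v : V) (t0 t1 : ℝ) (ht0 : 0 ≤ t0) (ht01 : t0 ≤ t1) (hpos : 0 < φ t0 v) :
    0 < φ t1 v := by
  haveI : Nonempty V := ⟨v⟩
  have hT : 0 ≤ t1 := ht0.trans ht01
  have hcont : ∀ u, ContinuousOn (fun s => φ s u) (Set.Ici 0) :=
    fun u x hx => (hder u x hx).continuousWithinAt
  -- bound on [0, t1]
  have hbd : ∀ u : V, ∃ C, ∀ x ∈ Set.Icc (0:ℝ) t1, φ x u ≤ C := by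
    intro u
    obtain ⟨x, -, hx⟩ := isCompact_Icc.exists_isMaxOn ⟨0, Set.mem_Icc.mpr ⟨le_rfl, hT⟩⟩
      ((hcont u).mono (fun y hy => hy.1))
    exact ⟨φ x u, fun y hy => hx hy⟩
  choose C hC using hbd
  set M : ℝ := max 0 (Finset.univ.sup' Finset.univ_nonempty C) with hMdef
  have hM0 : 0 ≤ M := le_max_left _ _
  have hM : ∀ u, ∀ x ∈ Set.Icc (0:ℝ) t1, φ x u ≤ M := by
    intro u x hx
    exact (hC u x hx).trans ((Finset.le_sup' C (Finset.mem_univ u)).trans (le_max_right _ _))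
  set K : ℝ := (1 / ν v) * (∑ w, μ v w) * M ^ (p - 2) with hKdef
  have hp2 : (0:ℝ) ≤ p - 2 := by linarith
  -- key differential inequality
  have key : ∀ τ ∈ Set.Icc (0:ℝ) t1, finPLap μ ν p (φ τ) v ≤ K * φ τ v := by
    intro τ hτ
    have hτ0 : (0:ℝ) ≤ τ := hτ.1
    have hφv : 0 ≤ φ τ v := hnn τ hτ0 v
    have hφvM : φ τ v ≤ M := hM v τ hτ
    have hterm : ∀ w : V,
        μ v w * |φ τ v - φ τ w| ^ (p - 2) * (φ τ v - φ τ w)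
          ≤ μ v w * M ^ (p - 2) * φ τ v := by
      intro w
      rcases le_or_gt (φ τ v - φ τ w) 0 with h | h
      · have h1 : μ v w * |φ τ v - φ τ w| ^ (p - 2) * (φ τ v - φ τ w) ≤ 0 :=
          mul_nonpos_of_nonneg_of_nonpos
            (mul_nonneg (hμnn v w) (Real.rpow_nonneg (abs_nonneg _) _)) h
        have h2 : 0 ≤ μ v w * M ^ (p - 2) * φ τ v :=
          mul_nonneg (mul_nonneg (hμnn v w) (Real.rpow_nonneg hM0 _)) hφv
        linarith
      · have habs : |φ τ v - φ τ w| = φ τ v - φ τ w := abs_of_pos h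
        rw [habs]
        have hle : φ τ v - φ τ w ≤ φ τ v := by
          have := hnn τ hτ0 w; linarith
        have hrp : (φ τ v - φ τ w) ^ (p - 2) ≤ M ^ (p - 2) :=
          Real.rpow_le_rpow h.le (hle.trans hφvM) hp2
        calc μ v w * (φ τ v - φ τ w) ^ (p - 2) * (φ τ v - φ τ w)
            ≤ μ v w * M ^ (p - 2) * (φ τ v - φ τ w) := by
              apply mul_le_mul_of_nonneg_right _ h.le
              exact mul_le_mul_of_nonneg_left hrp (hμnn v w)
          _ ≤ μ v w * M ^ (p - 2) * φ τ v := by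
              apply mul_le_mul_of_nonneg_left hle
              exact mul_nonneg (hμnn v w) (Real.rpow_nonneg hM0 _)
    have hsum : ∑ w, μ v w * |φ τ v - φ τ w| ^ (p - 2) * (φ τ v - φ τ w)
        ≤ ∑ w, μ v w * M ^ (p - 2) * φ τ v :=
      Finset.sum_le_sum (fun w _ => hterm w)
    have hν' : 0 < 1 / ν v := one_div_pos.mpr (hν v)
    unfold finPLap
    calc (1 / ν v) * ∑ w, μ v w * |φ τ v - φ τ w| ^ (p - 2) * (φ τ v - φ τ w)
        ≤ (1 / ν v) * ∑ w, μ v w * M ^ (p - 2) * φ τ v :=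
          mul_le_mul_of_nonneg_left hsum hν'.le
      _ = K * φ τ v := by
          rw [hKdef]
          rw [← Finset.sum_mul, ← Finset.sum_mul]
          ring
  -- monotone auxiliary function
  set g : ℝ → ℝ := fun τ => Real.exp (K * τ) * φ τ v with hgdef
  have hgd : ∀ x ∈ Set.Ioo t0 t1, HasDerivAt g
      (K * Real.exp (K * x) * φ x v + Real.exp (K * x) * (-(finPLap μ ν p (φ x) v))) x := by
    intro x hx
    have hx0 : 0 < x := lt_of_le_of_lt ht0 hx.1
    have hφd : HasDerivAt (fun s => φ s v) (-(finPLap μ ν p (φ x) v)) x :=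
      (hder v x hx0.le).hasDerivAt (Ici_mem_nhds hx0)
    have hexp : HasDerivAt (fun τ => Real.exp (K * τ)) (K * Real.exp (K * x)) x := by
      have h1 : HasDerivAt (fun τ : ℝ => K * τ) K x := by
        simpa using (hasDerivAt_id x).const_mul K
      simpa [mul_comm] using h1.exp
    exact hexp.mul hφd
  have hmono : MonotoneOn g (Set.Icc t0 t1) := by
    apply monotoneOn_of_deriv_nonneg (convex_Icc t0 t1)
    · apply ContinuousOn.mul
      · exact (Real.continuous_exp.comp (continuous_const.mul continuous_id)).continuousOn
      · exact (hcont v).mono (fun y hy => ht0.trans hy.1)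
    · rw [interior_Icc]
      intro x hx
      exact (hgd x hx).differentiableAt.differentiableWithinAt
    · rw [interior_Icc]
      intro x hx
      rw [(hgd x hx).deriv]
      have hx0 : 0 ≤ x := ht0.trans hx.1.le
      have hk := key x ⟨hx0, hx.2.le⟩
      have he : 0 < Real.exp (K * x) := Real.exp_pos _
      nlinarith
  have h01 : g t0 ≤ g t1 := hmono ⟨le_refl t0, ht01⟩ ⟨ht01, le_refl t1⟩ ht01
  have hg0 : 0 < g t0 := mul_pos (Real.exp_pos _) hpos
  have : 0 < g t1 := lt_of_lt_of_le hg0 h01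
  have he : 0 < Real.exp (K * t1) := Real.exp_pos _
  simp only [hgdef] at this
  nlinarith [this]

/-- strict positivity / strong maximum principle on finite graphs.
Let `(V,μ,ν)` be a finite connected weighted graph and `p ≥ 2`. If `φ ≥ 0` solves the
parabolic `p`-Laplace equation on `[0,∞)` and `φ(0,·) ≢ 0`, then `φ(t,v) > 0` for all
`t > 0` and all `v ∈ V`. -/
theorem stmt4 {V : Type*} [Fintype V]
    (μ : V → V → ℝ) (ν : V → ℝ)
    (hμsymm : ∀ v w, μ v w = μ w v) (hμnn : ∀ v w, 0 ≤ μ v w) (hμdiag : ∀ v, μ v v = 0)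
    (hν : ∀ v, 0 < ν v)
    (hconn : ∀ v w : V, Relation.ReflTransGen (fun a b => 0 < μ a b) v w)
    (p : ℝ) (hp : 2 ≤ p)
    (φ : ℝ → V → ℝ)
    (hnn : ∀ t, 0 ≤ t → ∀ v, 0 ≤ φ t v)
    (hder : ∀ v, ∀ t, 0 ≤ t →
      HasDerivWithinAt (fun s => φ s v) (-(finPLap μ ν p (φ t) v)) (Set.Ici 0) t)
    (hnz : ∃ v, φ 0 v ≠ 0) :
    ∀ t, 0 < t → ∀ v, 0 < φ t v := by
  have fwd := fwd_pos μ ν hμnn hν p hp φ hnn hder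
  obtain ⟨v0, hv0⟩ := hnz
  have hv0pos : 0 < φ 0 v0 := lt_of_le_of_ne (hnn 0 le_rfl v0) (Ne.symm hv0)
  -- neighbor propagation
  have step : ∀ b c : V, 0 < μ b c → (∀ s, 0 < s → 0 < φ s b) →
      (∀ s, 0 < s → 0 < φ s c) := by
    intro b c hμbc hb s hs
    by_contra h
    push_neg at h
    have h0 : φ s c = 0 := le_antisymm h (hnn s hs.le c)
    have hzero : ∀ τ ∈ Set.Icc (0:ℝ) s, φ τ c = 0 := by
      intro τ hτ
      by_contra hτ0
      have hτpos : 0 < φ τ c := lt_of_le_of_ne (hnn τ hτ.1 c) (Ne.symm hτ0)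
      have := fwd c τ s hτ.1 hτ.2 hτpos
      rw [h0] at this
      exact lt_irrefl 0 this
    set τ : ℝ := s / 2 with hτdef
    have hτpos : 0 < τ := by positivity
    have hτs : τ < s := by linarith
    have hda : HasDerivAt (fun r => φ r c) (-(finPLap μ ν p (φ τ) c)) τ :=
      (hder c τ hτpos.le).hasDerivAt (Ici_mem_nhds hτpos)
    have hev : (fun r => φ r c) =ᶠ[nhds τ] fun _ => (0:ℝ) :=
      Filter.eventuallyEq_of_mem (Ioo_mem_nhds hτpos hτs)
        (fun x hx => hzero x ⟨hx.1.le, hx.2.le⟩)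
    have hda0 : HasDerivAt (fun r => φ r c) 0 τ :=
      (hev.hasDerivAt_iff).mpr (hasDerivAt_const τ 0)
    have hL0 : finPLap μ ν p (φ τ) c = 0 := by
      have := hda.unique hda0
      linarith
    -- but the p-Laplacian is strictly negative at (τ, c)
    have hφτc : φ τ c = 0 := hzero τ ⟨hτpos.le, hτs.le⟩
    have hφτb : 0 < φ τ b := hb τ hτpos
    have hμcb : 0 < μ c b := by rw [← hμsymm b c]; exact hμbc
    have hsum : ∑ u, μ c u * |φ τ c - φ τ u| ^ (p - 2) * (φ τ c - φ τ u) < 0 := by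
      have hlt : ∑ u, μ c u * |φ τ c - φ τ u| ^ (p - 2) * (φ τ c - φ τ u)
          < ∑ _u : V, (0:ℝ) := by
        apply Finset.sum_lt_sum
        · intro u _
          apply mul_nonpos_of_nonneg_of_nonpos
          · exact mul_nonneg (hμnn c u) (Real.rpow_nonneg (abs_nonneg _) _)
          · rw [hφτc]; have := hnn τ hτpos.le u; linarith
        · refine ⟨b, Finset.mem_univ b, ?_⟩
          apply mul_neg_of_pos_of_neg
          · apply mul_pos hμcb
            apply Real.rpow_pos_of_pos
            rw [hφτc]
            rw [abs_of_nonpos (by linarith)]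
            linarith
          · rw [hφτc]; linarith
      simpa using hlt
    have : finPLap μ ν p (φ τ) c < 0 := by
      unfold finPLap
      exact mul_neg_of_pos_of_neg (one_div_pos.mpr (hν c)) hsum
    linarith
  have base : ∀ s, 0 < s → 0 < φ s v0 := fun s hs => fwd v0 0 s le_rfl hs.le hv0pos
  have main : ∀ v : V, ∀ s, 0 < s → 0 < φ s v := by
    intro v
    induction hconn v0 v with
    | refl => exact base
    | tail _ hbc ih => exact step _ _ hbc ih
  exact fun t ht v => main v t ht
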